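/- arXiv:1108.5346 — 2 statements merged into one kernel-verified Lean document; each statement's English description precedes it below -/
import Mathlib

section
/- Let μ_1, μ_2 be finite Borel measures on a Borel set A ⊂ ℝ^d with equal total mass, let (A_k) be a countable Borel partition of A such that μ_1(A_k) = 0 implies μ_2(A_k) = 0 for all k, and let ν be the measure defined by ν restricted to A_k equals (μ_2(A_k)/μ_1(A_k)) times μ_1 restricted to A_k (interpreting 0/0 as 0). Then there exists a coupling ξ ∈ M(μ_1, ν) such that ξ({(x,y) ∈ ℝ^d × ℝ^d : x ≠ y}) = (1/2) ∑_k |μ_1(A_k) − μ_2(A_k)|. -/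
open MeasureTheory ENNReal

/-- The set of couplings (transports) between two measures on `ℝ^d`. -/
def couplings {d : ℕ} (μ ν : Measure (Fin d → ℝ)) :
    Set (Measure ((Fin d → ℝ) × (Fin d → ℝ))) :=
  {ξ | ξ.map Prod.fst = μ ∧ ξ.map Prod.snd = ν}

/-- Given finite measures `μ₁, μ₂` of equal mass supported on `A`, a countable Borel
partition `(A_k)` of `A` with `μ₁(A_k) = 0 → μ₂(A_k) = 0`, and `ν` the
`(A_k)`-approximation of `μ₁` to `μ₂` (i.e. `ν|_{A_k} = (μ₂(A_k)/μ₁(A_k)) μ₁|_{A_k}`),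
there is a coupling `ξ` of `μ₁` and `ν` with
`ξ({x ≠ y}) = ½ ∑_k |μ₁(A_k) − μ₂(A_k)|`. -/
theorem partition_coupling {d : ℕ} (μ1 μ2 : Measure (Fin d → ℝ))
    [IsFiniteMeasure μ1] [IsFiniteMeasure μ2]
    (A : Set (Fin d → ℝ)) (Ak : ℕ → Set (Fin d → ℝ))
    (hmeas : ∀ k, MeasurableSet (Ak k))
    (hdisj : Pairwise (Function.onFun Disjoint Ak))
    (hcover : (⋃ k, Ak k) = A)
    (hμ1A : μ1 Aᶜ = 0) (hμ2A : μ2 Aᶜ = 0)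
    (hmass : μ1 Set.univ = μ2 Set.univ)
    (habs : ∀ k, μ1 (Ak k) = 0 → μ2 (Ak k) = 0) :
    ∃ ξ ∈ couplings μ1 (Measure.sum fun k => (μ2 (Ak k) / μ1 (Ak k)) • μ1.restrict (Ak k)),
      ξ {z : (Fin d → ℝ) × (Fin d → ℝ) | z.1 ≠ z.2}
        = ENNReal.ofReal ((1 / 2) * ∑' k, |(μ1 (Ak k)).toReal - (μ2 (Ak k)).toReal|) := by
  classical
  set c : ℕ → ℝ≥0∞ := fun k => μ2 (Ak k) / μ1 (Ak k) with hc
  have hcfin : ∀ k, c k ≠ ∞ := by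
    intro k
    by_cases h : μ1 (Ak k) = 0
    · simp [hc, h, habs k h]
    · exact (ENNReal.div_lt_top (measure_ne_top μ2 _) h).ne
  set ν : Measure (Fin d → ℝ) := Measure.sum fun k => c k • μ1.restrict (Ak k) with hν
  set α : Measure (Fin d → ℝ) := Measure.sum fun k => (min 1 (c k)) • μ1.restrict (Ak k) with hα
  set p : Measure (Fin d → ℝ) := Measure.sum fun k => ((1 : ℝ≥0∞) - c k) • μ1.restrict (Ak k) with hp
  set q : Measure (Fin d → ℝ) := Measure.sum fun k => (c k - 1) • μ1.restrict (Ak k) with hq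
  have hAmeas : MeasurableSet A := hcover ▸ MeasurableSet.iUnion hmeas
  have hμ1r : μ1.restrict A = μ1 :=
    (Measure.restrict_congr_set (MeasureTheory.ae_eq_univ.2 hμ1A)).trans Measure.restrict_univ
  -- the two scalar identities
  have hmin1 : ∀ x : ℝ≥0∞, min 1 x + (1 - x) = 1 := by
    intro x
    rcases le_total x 1 with h | h
    · rw [min_eq_right h, add_tsub_cancel_of_le h]
    · rw [min_eq_left h, tsub_eq_zero_of_le h, add_zero]
  have hminc : ∀ x : ℝ≥0∞, min 1 x + (x - 1) = x := by
    intro x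
    rcases le_total x 1 with h | h
    · rw [min_eq_right h, tsub_eq_zero_of_le h, add_zero]
    · rw [min_eq_left h, add_tsub_cancel_of_le h]
  have hαp : α + p = μ1 := by
    rw [hα, hp, Measure.sum_add_sum]
    have : (fun k => min 1 (c k) • μ1.restrict (Ak k) + (1 - c k) • μ1.restrict (Ak k))
        = fun k => μ1.restrict (Ak k) := by
      funext k; rw [← add_smul, hmin1, one_smul]
    rw [this, ← Measure.restrict_iUnion hdisj hmeas, hcover, hμ1r]
  have hαq : α + q = ν := by
    rw [hα, hq, hν, Measure.sum_add_sum]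
    congr 1
    funext k; rw [← add_smul, hminc]
  -- total masses
  have hcμ : ∀ k, c k * μ1 (Ak k) = μ2 (Ak k) := by
    intro k
    by_cases h : μ1 (Ak k) = 0
    · simp [hc, h, habs k h]
    · exact ENNReal.div_mul_cancel h (measure_ne_top μ1 _)
  have hμ2univ : μ2 A = μ2 Set.univ := by
    have := measure_add_measure_compl (μ := μ2) hAmeas
    rw [hμ2A, add_zero] at this; exact this
  have hμ1univ : μ1 A = μ1 Set.univ := by
    have := measure_add_measure_compl (μ := μ1) hAmeas
    rw [hμ1A, add_zero] at this; exact this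
  have hν_univ : ν Set.univ = μ1 Set.univ := by
    rw [hν, Measure.sum_apply _ MeasurableSet.univ]
    simp only [Measure.smul_apply, Measure.restrict_apply_univ, smul_eq_mul]
    rw [tsum_congr hcμ, ← measure_iUnion hdisj hmeas, hcover, hμ2univ, hmass]
  have hαp_u : α Set.univ + p Set.univ = μ1 Set.univ := by
    have := congrArg (fun m : Measure (Fin d → ℝ) => m Set.univ) hαp
    simpa using this
  have hαq_u : α Set.univ + q Set.univ = μ1 Set.univ := by
    have := congrArg (fun m : Measure (Fin d → ℝ) => m Set.univ) hαq
    simpa [hν_univ] using this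
  have hα_fin : α Set.univ ≠ ∞ := by
    refine ne_top_of_le_ne_top (measure_ne_top μ1 Set.univ) ?_
    rw [← hαp_u]; exact le_self_add
  have hpq_u : p Set.univ = q Set.univ := by
    rw [← ENNReal.add_right_inj hα_fin, hαp_u, hαq_u]
  set δ : ℝ≥0∞ := p Set.univ with hδ
  have hδtop : δ ≠ ∞ := by
    refine ne_top_of_le_ne_top (measure_ne_top μ1 Set.univ) ?_
    rw [← hαp_u]; exact le_add_self
  haveI : IsFiniteMeasure p := ⟨hδ ▸ hδtop.lt_top⟩
  haveI : IsFiniteMeasure q := ⟨hpq_u ▸ hδtop.lt_top⟩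
  set ψ : (Fin d → ℝ) → (Fin d → ℝ) × (Fin d → ℝ) := fun x => (x, x) with hψdef
  have hψ : Measurable ψ := measurable_id.prodMk measurable_id
  set ξ : Measure ((Fin d → ℝ) × (Fin d → ℝ)) := α.map ψ + δ⁻¹ • p.prod q with hξ
  -- marginals
  have hfst : ξ.map Prod.fst = μ1 := by
    rw [hξ, Measure.map_add _ _ measurable_fst, Measure.map_smul,
      Measure.map_fst_prod, Measure.map_map measurable_fst hψ]
    have h1 : (Prod.fst ∘ ψ) = (id : (Fin d → ℝ) → (Fin d → ℝ)) := rfl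
    rw [h1, Measure.map_id, ← hpq_u]
    by_cases h0 : δ = 0
    · have hp0 : p = 0 := Measure.measure_univ_eq_zero.mp (hδ ▸ h0)
      rw [← hαp, hp0]; simp
    · rw [smul_smul, ENNReal.inv_mul_cancel h0 hδtop, one_smul, hαp]
  have hsnd : ξ.map Prod.snd = ν := by
    rw [hξ, Measure.map_add _ _ measurable_snd, Measure.map_smul,
      Measure.map_snd_prod, Measure.map_map measurable_snd hψ]
    have h1 : (Prod.snd ∘ ψ) = (id : (Fin d → ℝ) → (Fin d → ℝ)) := rfl
    rw [h1, Measure.map_id]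
    by_cases h0 : δ = 0
    · have hq0 : q = 0 := Measure.measure_univ_eq_zero.mp ((hδ.symm.trans hpq_u) ▸ h0)
      rw [← hαq, hq0]; simp
    · rw [smul_smul, ENNReal.inv_mul_cancel h0 hδtop, one_smul, hαq]
  -- mutual singularity of p and q
  set T : Set (Fin d → ℝ) := ⋃ k, (if 1 < c k then Ak k else ∅) with hT
  have hTm : MeasurableSet T := by
    refine MeasurableSet.iUnion fun k => ?_
    split_ifs
    · exact hmeas k
    · exact MeasurableSet.empty
  have hpT : p T = 0 := by
    rw [hp, Measure.sum_apply _ hTm]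
    refine ENNReal.tsum_eq_zero.mpr fun k => ?_
    simp only [Measure.smul_apply, smul_eq_mul, Measure.restrict_apply hTm]
    by_cases h : 1 < c k
    · rw [tsub_eq_zero_of_le h.le, zero_mul]
    · have hTk : T ∩ Ak k = ∅ := by
        refine Set.eq_empty_iff_forall_notMem.mpr ?_
        rintro x ⟨hxT, hxk⟩
        rw [hT, Set.mem_iUnion] at hxT
        obtain ⟨j, hj⟩ := hxT
        by_cases hjk : j = k
        · subst hjk; rw [if_neg h] at hj; exact hj
        · split_ifs at hj with hcj
          · exact Set.disjoint_left.mp (hdisj hjk) hj hxk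
          · exact hj
      rw [hTk, measure_empty, mul_zero]
  have hqTc : q Tᶜ = 0 := by
    rw [hq, Measure.sum_apply _ hTm.compl]
    refine ENNReal.tsum_eq_zero.mpr fun k => ?_
    simp only [Measure.smul_apply, smul_eq_mul, Measure.restrict_apply hTm.compl]
    by_cases h : 1 < c k
    · have hsub : Ak k ⊆ T := by
        rw [hT]
        refine Set.subset_iUnion_of_subset k ?_
        rw [if_pos h]
      have : Tᶜ ∩ Ak k = ∅ := by
        refine Set.eq_empty_iff_forall_notMem.mpr ?_
        rintro x ⟨hxT, hxk⟩
        exact hxT (hsub hxk)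
      rw [this, measure_empty, mul_zero]
    · rw [tsub_eq_zero_of_le (not_lt.mp h), zero_mul]
  have hDm : MeasurableSet {z : (Fin d → ℝ) × (Fin d → ℝ) | z.1 = z.2} :=
    (isClosed_eq continuous_fst continuous_snd).measurableSet
  have hdiag : (p.prod q) {z : (Fin d → ℝ) × (Fin d → ℝ) | z.1 = z.2} = 0 := by
    have hsub : {z : (Fin d → ℝ) × (Fin d → ℝ) | z.1 = z.2} ⊆ (T ×ˢ Set.univ) ∪ (Set.univ ×ˢ Tᶜ) := by
      rintro ⟨x, y⟩ hxy
      simp only [Set.mem_setOf_eq] at hxy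
      subst hxy
      by_cases hx : x ∈ T
      · exact Or.inl ⟨hx, trivial⟩
      · exact Or.inr ⟨trivial, hx⟩
    refine measure_mono_null hsub (measure_union_null ?_ ?_)
    · rw [Measure.prod_prod, hpT, zero_mul]
    · rw [Measure.prod_prod, hqTc, mul_zero]
  -- value on the off-diagonal
  have hξN : ξ {z : (Fin d → ℝ) × (Fin d → ℝ) | z.1 ≠ z.2} = δ := by
    have hNeq : {z : (Fin d → ℝ) × (Fin d → ℝ) | z.1 ≠ z.2} = {z : (Fin d → ℝ) × (Fin d → ℝ) | z.1 = z.2}ᶜ := rfl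
    rw [hξ, Measure.add_apply, Measure.smul_apply, smul_eq_mul]
    have h1 : (α.map ψ) {z : (Fin d → ℝ) × (Fin d → ℝ) | z.1 ≠ z.2} = 0 := by
      rw [Measure.map_apply hψ (hNeq ▸ hDm.compl)]
      have : ψ ⁻¹' {z : (Fin d → ℝ) × (Fin d → ℝ) | z.1 ≠ z.2} = ∅ := by
        ext x; simp [hψdef]
      rw [this, measure_empty]
    have h2 : (p.prod q) {z : (Fin d → ℝ) × (Fin d → ℝ) | z.1 ≠ z.2} = δ * δ := by
      rw [hNeq, measure_compl hDm (measure_ne_top _ _), hdiag, tsub_zero,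
        ← Set.univ_prod_univ, Measure.prod_prod, ← hpq_u]
    rw [h1, h2, zero_add]
    by_cases h0 : δ = 0
    · rw [h0]; simp
    · rw [← mul_assoc, ENNReal.inv_mul_cancel h0 hδtop, one_mul]
  -- δ as a sum
  have hδ_eq : δ = ∑' k, (μ1 (Ak k) - μ2 (Ak k)) := by
    rw [hδ, hp, Measure.sum_apply _ MeasurableSet.univ]
    refine tsum_congr fun k => ?_
    simp only [Measure.smul_apply, smul_eq_mul, Measure.restrict_apply_univ]
    rw [ENNReal.sub_mul (fun _ _ => measure_ne_top μ1 _), one_mul, hcμ k]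
  -- real-valued computations
  have hsum1 : ∑' k, μ1 (Ak k) ≠ ∞ := by
    rw [← measure_iUnion hdisj hmeas]; exact measure_ne_top _ _
  have hsum2 : ∑' k, μ2 (Ak k) ≠ ∞ := by
    rw [← measure_iUnion hdisj hmeas]; exact measure_ne_top _ _
  have ha : Summable fun k => (μ1 (Ak k)).toReal := ENNReal.summable_toReal hsum1
  have hb : Summable fun k => (μ2 (Ak k)).toReal := ENNReal.summable_toReal hsum2
  have hmne : ∑' k, (μ1 (Ak k) - μ2 (Ak k)) ≠ ∞ := hδ_eq ▸ hδtop
  have hm : Summable fun k => ((μ1 (Ak k) - μ2 (Ak k))).toReal :=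
    ENNReal.summable_toReal hmne
  have hm_tsum : ∑' k, ((μ1 (Ak k) - μ2 (Ak k))).toReal = δ.toReal := by
    rw [hδ_eq, ENNReal.tsum_toReal_eq fun k =>
      ne_top_of_le_ne_top (measure_ne_top μ1 _) tsub_le_self]
  have hab : (∑' k, (μ1 (Ak k)).toReal) = ∑' k, (μ2 (Ak k)).toReal := by
    rw [← ENNReal.tsum_toReal_eq (fun k => measure_ne_top μ1 _),
      ← ENNReal.tsum_toReal_eq (fun k => measure_ne_top μ2 _),
      ← measure_iUnion hdisj hmeas, ← measure_iUnion (μ := μ2) hdisj hmeas,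
      hcover, hμ1univ, hμ2univ, hmass]
  have hptwise : ∀ k, |(μ1 (Ak k)).toReal - (μ2 (Ak k)).toReal|
      = 2 * ((μ1 (Ak k) - μ2 (Ak k))).toReal - (μ1 (Ak k)).toReal + (μ2 (Ak k)).toReal := by
    intro k
    rcases le_total (μ2 (Ak k)) (μ1 (Ak k)) with h | h
    · have h' : (μ2 (Ak k)).toReal ≤ (μ1 (Ak k)).toReal :=
        ENNReal.toReal_mono (measure_ne_top μ1 _) h
      rw [ENNReal.toReal_sub_of_le h (measure_ne_top μ1 _), abs_of_nonneg (by linarith)]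
      ring
    · have h' : (μ1 (Ak k)).toReal ≤ (μ2 (Ak k)).toReal :=
        ENNReal.toReal_mono (measure_ne_top μ2 _) h
      rw [tsub_eq_zero_of_le h, ENNReal.toReal_zero, abs_of_nonpos (by linarith)]
      ring
  have habs_sum : ∑' k, |(μ1 (Ak k)).toReal - (μ2 (Ak k)).toReal| = 2 * δ.toReal := by
    rw [tsum_congr hptwise,
      Summable.tsum_add ((hm.mul_left 2).sub ha) hb,
      Summable.tsum_sub (hm.mul_left 2) ha, tsum_mul_left, hm_tsum, hab]
    ring
  refine ⟨ξ, ⟨hfst, hsnd⟩, ?_⟩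
  rw [hξN, habs_sum, show (1 / 2 : ℝ) * (2 * δ.toReal) = δ.toReal by ring,
    ENNReal.ofReal_toReal hδtop]
end

section
/- Let a, b ∈ ℝ^d be distinct, let μ = (1/2)δ_a + (1/2)δ_b, and let μ̂_N be the empirical measure of N i.i.d. μ-distributed random variables. Then for every p ≥ 1, E[ρ_p^p(μ, μ̂_N)]^{1/p} = ‖a − b‖ · E[ |μ̂_N({a}) − 1/2| ]^{1/p}, and consequently there exist constants 0 < c ≤ C < ∞ such that c · N^{−1/(2p)} ≤ E[ρ_p^p(μ, μ̂_N)]^{1/p} ≤ C · N^{−1/(2p)} for all N ≥ 1. -/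
open MeasureTheory ENNReal

/-- `ρ_p^p(μ,ν)`: the `p`-th power of the `p`-th Wasserstein metric. -/
noncomputable def WpPow {d : ℕ} (p : ℝ) (μ ν : Measure (Fin d → ℝ)) : ℝ≥0∞ :=
  ⨅ ξ ∈ couplings μ ν, ∫⁻ z, (‖z.1 - z.2‖₊ : ℝ≥0∞) ^ p ∂ξ

/-- The empirical measure `(1/N) ∑_{j<N} δ_{x_j}` of a vector of `N` points. -/
noncomputable def empMeas {d : ℕ} (N : ℕ) (x : Fin N → (Fin d → ℝ)) :
    Measure (Fin d → ℝ) :=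
  (N : ℝ≥0∞)⁻¹ • ∑ j, Measure.dirac (x j)

/-- `E[ρ_p^p(μ, μ̂_N)]`: the expected `p`-th power Wasserstein distance between `μ`
and the empirical measure of `N` i.i.d. `μ`-distributed samples (modelled on the
canonical product space). -/
noncomputable def expWpPow {d : ℕ} (p : ℝ) (μ : Measure (Fin d → ℝ)) (N : ℕ) :
    ℝ≥0∞ :=
  ∫⁻ x, WpPow p μ (empMeas N x) ∂(Measure.pi fun _ : Fin N => μ)

/-- The unit cube `[0,1)^d`. -/
def unitBox (d : ℕ) : Set (Fin d → ℝ) := Set.univ.pi fun _ => Set.Ico (0 : ℝ) 1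

/-!
Both measures are carried by `{a, b}`, so an optimal coupling leaves as much mass in place as
it can and sends only the excess `|μ̂_N({a}) - 1/2|` across the distance `‖a - b‖`. Over the
`2^N` equally likely samples this excess is `|S_N| / (2N)` for the Rademacher sum `S_N`, and
`√(N/3) ≤ E|S_N| ≤ √N`: the upper bound is Cauchy–Schwarz against `E S_N² = N`, the lower one
is the interpolation `(E S_N²)³ ≤ (E|S_N|)² E S_N⁴` together with `E S_N⁴ = 3N² - 2N`.
-/

open Set
open scoped Finset

section Couplings

variable {d : ℕ} {μ ν : Measure (Fin d → ℝ)} {ξ : Measure ((Fin d → ℝ) × (Fin d → ℝ))}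

lemma map_swap_mem_couplings (hξ : ξ ∈ couplings μ ν) : ξ.map Prod.swap ∈ couplings ν μ := by
  obtain ⟨hfst, hsnd⟩ := hξ
  constructor
  · rw [Measure.map_map measurable_fst measurable_swap]; exact hsnd
  · rw [Measure.map_map measurable_snd measurable_swap]; exact hfst

lemma WpPow_comm (p : ℝ) (μ ν : Measure (Fin d → ℝ)) : WpPow p μ ν = WpPow p ν μ := by
  have h_le (μ ν : Measure (Fin d → ℝ)) : WpPow p ν μ ≤ WpPow p μ ν :=
    le_iInf₂ fun ξ hξ => by
      refine (iInf₂_le _ (map_swap_mem_couplings hξ)).trans_eq ?_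
      rw [lintegral_map (by fun_prop) measurable_swap]
      exact lintegral_congr fun z => by rw [Prod.fst_swap, Prod.snd_swap, ← nnnorm_neg, neg_sub]
  exact le_antisymm (h_le ν μ) (h_le μ ν)

lemma couplings_apply_prod_univ (hξ : ξ ∈ couplings μ ν) {s : Set (Fin d → ℝ)}
    (hs : MeasurableSet s) : ξ (s ×ˢ univ) = μ s := by
  rw [← hξ.1, Measure.map_apply measurable_fst hs, ← prod_univ]

lemma couplings_apply_univ_prod (hξ : ξ ∈ couplings μ ν) {s : Set (Fin d → ℝ)}
    (hs : MeasurableSet s) : ξ (univ ×ˢ s) = ν s := by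
  rw [← hξ.2, Measure.map_apply measurable_snd hs, ← univ_prod]

lemma le_add_measure_offDiag (hξ : ξ ∈ couplings μ ν) {s : Set (Fin d → ℝ)}
    (hs : MeasurableSet s) : μ s ≤ ν s + ξ {z | z.1 ≠ z.2} := by
  rw [← couplings_apply_prod_univ hξ hs, ← couplings_apply_univ_prod hξ hs]
  refine (measure_mono fun z hz => ?_).trans (measure_union_le _ _)
  by_cases h : z.1 = z.2
  · exact Or.inl ⟨trivial, h ▸ hz.1⟩
  · exact Or.inr h

lemma ae_mem_of_mem_couplings (hξ : ξ ∈ couplings μ ν) {s : Set (Fin d → ℝ)}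
    (hμ : μ sᶜ = 0) (hν : ν sᶜ = 0) : ∀ᵐ z ∂ξ, z.1 ∈ s ∧ z.2 ∈ s := by
  have h1 : ∀ᵐ z ∂ξ, z.1 ∈ s := ae_of_ae_map measurable_fst.aemeasurable (hξ.1 ▸ hμ)
  have h2 : ∀ᵐ z ∂ξ, z.2 ∈ s := ae_of_ae_map measurable_snd.aemeasurable (hξ.2 ▸ hν)
  exact h1.and h2

end Couplings

section TwoPoint

variable {d : ℕ} {a b : Fin d → ℝ} {μ ν : Measure (Fin d → ℝ)}

lemma eq_smul_dirac_add_smul_dirac (hab : a ≠ b) (hμ : μ {a, b}ᶜ = 0) :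
    μ = μ {a} • Measure.dirac a + μ {b} • Measure.dirac b := by
  rw [← Measure.restrict_singleton, ← Measure.restrict_singleton,
    ← Measure.restrict_union (disjoint_singleton.2 hab) (measurableSet_singleton b),
    singleton_union, Measure.restrict_eq_self_of_ae_mem (Filter.eventually_mem_set.2 hμ)]

lemma measure_singleton_add_measure_singleton [IsProbabilityMeasure μ] (hab : a ≠ b)
    (hμ : μ {a, b}ᶜ = 0) : μ {a} + μ {b} = 1 := by
  rw [← measure_union (disjoint_singleton.2 hab) (measurableSet_singleton b), singleton_union,
    ← prob_compl_eq_zero_iff ((measurableSet_singleton b).insert a)]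
  exact hμ

/-- Transport the excess `μ {a} - ν {a}` from `a` to `b` and leave everything else in place. -/
lemma WpPow_le_of_le (p : ℝ) (hp : 0 < p) [IsProbabilityMeasure μ] [IsProbabilityMeasure ν]
    (hab : a ≠ b) (hμ : μ {a, b}ᶜ = 0) (hν : ν {a, b}ᶜ = 0) (hle : ν {a} ≤ μ {a}) :
    WpPow p μ ν ≤ (‖a - b‖₊ : ℝ≥0∞) ^ p * ENNReal.ofReal |(μ {a}).toReal - (ν {a}).toReal| := by
  set ξ : Measure ((Fin d → ℝ) × (Fin d → ℝ)) := ν {a} • Measure.dirac (a, a)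
    + (μ {a} - ν {a}) • Measure.dirac (a, b) + μ {b} • Measure.dirac (b, b)
  have hν_b : μ {a} - ν {a} + μ {b} = ν {b} := by
    rw [ENNReal.sub_add_eq_add_sub hle (measure_ne_top ν _),
      measure_singleton_add_measure_singleton hab hμ,
      ← measure_singleton_add_measure_singleton hab hν,
      ENNReal.add_sub_cancel_left (measure_ne_top ν _)]
  have hξ : ξ ∈ couplings μ ν := by
    constructor
    · simp only [ξ, Measure.map_add _ _ measurable_fst, Measure.map_smul, Measure.map_dirac]
      rw [← add_smul, add_tsub_cancel_of_le hle, ← eq_smul_dirac_add_smul_dirac hab hμ]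
    · simp only [ξ, Measure.map_add _ _ measurable_snd, Measure.map_smul, Measure.map_dirac]
      rw [add_assoc, ← add_smul, hν_b, ← eq_smul_dirac_add_smul_dirac hab hν]
  refine (iInf₂_le ξ hξ).trans_eq ?_
  simp only [ξ, lintegral_add_measure, lintegral_smul_measure, lintegral_dirac, sub_self,
    nnnorm_zero, ENNReal.coe_zero, ENNReal.zero_rpow_of_pos hp, smul_eq_mul, mul_zero, zero_add,
    add_zero]
  rw [mul_comm, abs_of_nonneg (sub_nonneg.2 (ENNReal.toReal_mono (by simp) hle)),
    ← ENNReal.toReal_sub_of_le hle (by simp), ENNReal.ofReal_toReal (by simp)]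

lemma ofReal_abs_sub_le_measure_offDiag [IsProbabilityMeasure μ] [IsProbabilityMeasure ν]
    {ξ : Measure ((Fin d → ℝ) × (Fin d → ℝ))} (hξ : ξ ∈ couplings μ ν) (hab : a ≠ b)
    (hμ : μ {a, b}ᶜ = 0) (hν : ν {a, b}ᶜ = 0) :
    ENNReal.ofReal |(μ {a}).toReal - (ν {a}).toReal| ≤ ξ {z | z.1 ≠ z.2} := by
  set D := {z : (Fin d → ℝ) × (Fin d → ℝ) | z.1 ≠ z.2}
  have hDfin : ξ D ≠ ⊤ := by
    refine ne_top_of_le_ne_top (b := ξ univ) ?_ (measure_mono (subset_univ _))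
    rw [← univ_prod_univ, couplings_apply_prod_univ hξ MeasurableSet.univ]
    simp
  have h_toReal {x y : ℝ≥0∞} (hy : y ≠ ⊤) (h : x ≤ y + ξ D) :
      x.toReal ≤ y.toReal + (ξ D).toReal := by
    rw [← ENNReal.toReal_add hy hDfin]
    exact ENNReal.toReal_mono (ENNReal.add_ne_top.2 ⟨hy, hDfin⟩) h
  have h_sum (ρ : Measure (Fin d → ℝ)) [IsProbabilityMeasure ρ] (hρ : ρ {a, b}ᶜ = 0) :
      (ρ {a}).toReal + (ρ {b}).toReal = 1 := by
    rw [← ENNReal.toReal_add (measure_ne_top ρ _) (measure_ne_top ρ _),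
      measure_singleton_add_measure_singleton hab hρ, ENNReal.toReal_one]
  have h_a := h_toReal (measure_ne_top ν _) (le_add_measure_offDiag hξ (measurableSet_singleton a))
  have h_b := h_toReal (measure_ne_top ν _) (le_add_measure_offDiag hξ (measurableSet_singleton b))
  rw [ENNReal.ofReal_le_iff_le_toReal hDfin, abs_le]
  constructor <;> linarith [h_sum μ hμ, h_sum ν hν]

lemma mul_measure_offDiag_le_lintegral (p : ℝ) {ξ : Measure ((Fin d → ℝ) × (Fin d → ℝ))}
    (hξ : ξ ∈ couplings μ ν) (hμ : μ {a, b}ᶜ = 0) (hν : ν {a, b}ᶜ = 0) :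
    (‖a - b‖₊ : ℝ≥0∞) ^ p * ξ {z | z.1 ≠ z.2} ≤ ∫⁻ z, (‖z.1 - z.2‖₊ : ℝ≥0∞) ^ p ∂ξ := by
  have hD : MeasurableSet {z : (Fin d → ℝ) × (Fin d → ℝ) | z.1 ≠ z.2} :=
    measurableSet_diagonal.compl
  rw [← lintegral_indicator_const hD]
  refine lintegral_mono_ae ?_
  filter_upwards [ae_mem_of_mem_couplings hξ hμ hν] with z ⟨hz1, hz2⟩
  by_cases hz : z.1 ≠ z.2
  · rw [indicator_of_mem hz]
    obtain ⟨x, y⟩ := z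
    simp only [mem_insert_iff, mem_singleton_iff] at hz1 hz2
    rcases hz1 with rfl | rfl <;> rcases hz2 with rfl | rfl
    · exact absurd rfl hz
    · exact le_rfl
    · rw [← nnnorm_neg, neg_sub]
    · exact absurd rfl hz
  · simp [hz]

lemma le_WpPow (p : ℝ) [IsProbabilityMeasure μ] [IsProbabilityMeasure ν]
    (hab : a ≠ b) (hμ : μ {a, b}ᶜ = 0) (hν : ν {a, b}ᶜ = 0) :
    (‖a - b‖₊ : ℝ≥0∞) ^ p * ENNReal.ofReal |(μ {a}).toReal - (ν {a}).toReal| ≤ WpPow p μ ν :=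
  le_iInf₂ fun _ hξ => (mul_le_mul_right (ofReal_abs_sub_le_measure_offDiag hξ hab hμ hν) _).trans
    (mul_measure_offDiag_le_lintegral p hξ hμ hν)

theorem WpPow_eq_of_measure_compl_pair_eq_zero (p : ℝ) (hp : 0 < p) [IsProbabilityMeasure μ]
    [IsProbabilityMeasure ν] (hab : a ≠ b) (hμ : μ {a, b}ᶜ = 0) (hν : ν {a, b}ᶜ = 0) :
    WpPow p μ ν = (‖a - b‖₊ : ℝ≥0∞) ^ p * ENNReal.ofReal |(μ {a}).toReal - (ν {a}).toReal| := by
  refine le_antisymm ?_ (le_WpPow p hab hμ hν)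
  rcases le_total (ν {a}) (μ {a}) with h | h
  · exact WpPow_le_of_le p hp hab hμ hν h
  · rw [WpPow_comm, abs_sub_comm]
    exact WpPow_le_of_le p hp hab hν hμ h

end TwoPoint

section Empirical

variable {d N : ℕ} (x : Fin N → (Fin d → ℝ))

lemma empMeas_apply (s : Set (Fin d → ℝ)) :
    empMeas N x s = (N : ℝ≥0∞)⁻¹ * ∑ j, s.indicator 1 (x j) := by
  simp [empMeas, Measure.dirac_apply]

lemma isProbabilityMeasure_empMeas (hN : N ≠ 0) : IsProbabilityMeasure (empMeas N x) :=
  ⟨by simp [empMeas_apply, ENNReal.inv_mul_cancel, hN]⟩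

lemma empMeas_compl_eq_zero {s : Set (Fin d → ℝ)} (hx : ∀ j, x j ∈ s) : empMeas N x sᶜ = 0 := by
  simp [empMeas_apply, hx]

end Empirical

lemma MeasureTheory.Measure.pi_eq_sum_smul_dirac {ι V α : Type*} [Fintype ι] [DecidableEq ι]
    [Fintype V] [MeasurableSpace α] {μ : Measure α} [SigmaFinite μ] {w : V → ℝ≥0∞} {g : V → α}
    (hμ : μ = ∑ v, w v • Measure.dirac (g v)) :
    Measure.pi (fun _ : ι => μ) =
      ∑ s : ι → V, (∏ i, w (s i)) • Measure.dirac (fun i => g (s i)) := by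
  subst hμ
  refine Measure.pi_eq fun t ht => ?_
  simp only [Measure.coe_finsetSum, Finset.sum_apply, Measure.smul_apply, smul_eq_mul,
    Measure.dirac_apply' _ (MeasurableSet.univ_pi ht), Measure.dirac_apply' _ (ht _),
    Fintype.prod_sum]
  refine Finset.sum_congr rfl fun s _ => ?_
  rw [Finset.prod_mul_distrib]
  congr 1
  classical
  simp only [Set.indicator_apply, Set.mem_univ_pi, Pi.one_apply]
  exact Fintype.prod_boole.symm

section UniformPair

variable {d N : ℕ} {a b : Fin d → ℝ}

noncomputable def uniformPair (a b : Fin d → ℝ) : Measure (Fin d → ℝ) :=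
  (2 : ℝ≥0∞)⁻¹ • (Measure.dirac a + Measure.dirac b)

instance : IsProbabilityMeasure (uniformPair a b) :=
  ⟨by simp [uniformPair, ← two_mul, ENNReal.mul_inv_cancel]⟩

lemma uniformPair_compl_pair_eq_zero : uniformPair a b {a, b}ᶜ = 0 := by
  simp [uniformPair]

lemma uniformPair_singleton_left (hab : a ≠ b) : uniformPair a b {a} = 2⁻¹ := by
  simp [uniformPair, hab.symm]

lemma ae_forall_mem_pair :
    ∀ᵐ x ∂(Measure.pi fun _ : Fin N => uniformPair a b), ∀ j, x j ∈ ({a, b} : Set _) :=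
  Filter.eventually_all.2 fun _ =>
    Measure.tendsto_eval_ae_ae.eventually
      (Filter.eventually_mem_set.2 uniformPair_compl_pair_eq_zero)

theorem expWpPow_uniformPair (p : ℝ) (hp : 0 < p) (hab : a ≠ b) (hN : N ≠ 0) :
    expWpPow p (uniformPair a b) N = (‖a - b‖₊ : ℝ≥0∞) ^ p *
      ∫⁻ x, ENNReal.ofReal |(empMeas N x {a}).toReal - 1 / 2|
        ∂(Measure.pi fun _ : Fin N => uniformPair a b) := by
  rw [expWpPow, ← lintegral_const_mul' _ _ (by simp [hp.le])]
  refine lintegral_congr_ae ?_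
  filter_upwards [ae_forall_mem_pair] with x hx
  have := isProbabilityMeasure_empMeas x hN
  rw [WpPow_eq_of_measure_compl_pair_eq_zero p hp hab uniformPair_compl_pair_eq_zero
    (empMeas_compl_eq_zero x hx), uniformPair_singleton_left hab, abs_sub_comm]
  norm_num

lemma uniformPair_eq_sum_bool :
    uniformPair a b = ∑ v : Bool, (2 : ℝ≥0∞)⁻¹ • Measure.dirac (if v then a else b) := by
  simp [uniformPair, smul_add]

lemma lintegral_pi_uniformPair (f : (Fin N → (Fin d → ℝ)) → ℝ≥0∞) :
    ∫⁻ x, f x ∂(Measure.pi fun _ : Fin N => uniformPair a b) =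
      (2 ^ N)⁻¹ * ∑ s : Fin N → Bool, f (fun j => if s j then a else b) := by
  rw [Measure.pi_eq_sum_smul_dirac uniformPair_eq_sum_bool, lintegral_finsetSum_measure,
    Finset.mul_sum]
  simp [lintegral_smul_measure, lintegral_dirac, ENNReal.inv_pow]

lemma empMeas_pair_singleton_left (hab : a ≠ b) (s : Fin N → Bool) :
    (empMeas N (fun j => if s j then a else b) {a}).toReal = #{j | s j} / N := by
  simp [empMeas_apply, apply_ite, hab.symm, Finset.sum_boole, div_eq_inv_mul]

end UniformPair

lemma sum_sq_pow_three_le_sq_sum_abs_mul_sum_pow_four {ι : Type*} (s : Finset ι) (f : ι → ℝ) :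
    (∑ i ∈ s, f i ^ 2) ^ 3 ≤ (∑ i ∈ s, |f i|) ^ 2 * ∑ i ∈ s, f i ^ 4 := by
  set A := ∑ i ∈ s, |f i|
  set B := ∑ i ∈ s, f i ^ 2
  set C := ∑ i ∈ s, |f i| ^ 3
  set D := ∑ i ∈ s, f i ^ 4
  have hBC : B ^ 2 ≤ A * C := Finset.sum_sq_le_sum_mul_sum_of_sq_le_mul s
    (fun i _ => abs_nonneg _) (fun i _ => by positivity) fun i _ =>
      (by linear_combination (-(|f i| ^ 2 + f i ^ 2)) * sq_abs (f i) :
        (f i ^ 2) ^ 2 = |f i| * |f i| ^ 3).le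
  have hCD : C ^ 2 ≤ B * D := Finset.sum_sq_le_sum_mul_sum_of_sq_le_mul s
    (fun i _ => by positivity) (fun i _ => by positivity) fun i _ =>
      (by linear_combination (|f i| ^ 4 + |f i| ^ 2 * f i ^ 2 + f i ^ 4) * sq_abs (f i) :
        (|f i| ^ 3) ^ 2 = f i ^ 2 * f i ^ 4).le
  have hB : 0 ≤ B := by positivity
  have hD : 0 ≤ D := by positivity
  have h4 : B * B ^ 3 ≤ B * (A ^ 2 * D) :=
    calc B * B ^ 3 = (B ^ 2) ^ 2 := by ring
      _ ≤ (A * C) ^ 2 := pow_le_pow_left₀ (sq_nonneg B) hBC 2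
      _ = A ^ 2 * C ^ 2 := by ring
      _ ≤ A ^ 2 * (B * D) := by gcongr
      _ = B * (A ^ 2 * D) := by ring
  rcases hB.eq_or_lt with hB0 | hBpos
  · rw [← hB0, zero_pow three_ne_zero]
    exact mul_nonneg (sq_nonneg A) hD
  · exact le_of_mul_le_mul_left h4 hBpos

section SignSum

variable {n : ℕ}

def signSum (s : Fin n → Bool) : ℝ := ∑ j, if s j then 1 else -1

lemma signSum_eq (s : Fin n → Bool) : signSum s = 2 * #{j | s j} - n := by
  have h (j : Fin n) : (if s j then (1 : ℝ) else -1) = 2 * (if s j then 1 else 0) - 1 := by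
    split_ifs <;> norm_num
  simp only [signSum, h, Finset.sum_sub_distrib, ← Finset.mul_sum, Finset.sum_boole]
  simp

lemma sum_fin_succ_bool {M : Type*} [AddCommMonoid M] (F : (Fin (n + 1) → Bool) → M) :
    ∑ s, F s = ∑ t : Fin n → Bool, (F (Fin.cons true t) + F (Fin.cons false t)) := by
  rw [← (Fin.consEquiv fun _ => Bool).sum_comp, Fintype.sum_prod_type, Fintype.sum_bool,
    Finset.sum_add_distrib]
  rfl

lemma signSum_cons (v : Bool) (t : Fin n → Bool) :
    signSum (Fin.cons v t : Fin (n + 1) → Bool) = (if v then 1 else -1) + signSum t := by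
  simp [signSum, Fin.sum_univ_succ]

lemma sum_signSum_sq (n : ℕ) : ∑ s : Fin n → Bool, signSum s ^ 2 = 2 ^ n * n := by
  induction n with
  | zero => simp [signSum]
  | succ n ih =>
    simp only [sum_fin_succ_bool, signSum_cons, if_true, Bool.false_eq_true, if_false]
    have h (x : ℝ) : (1 + x) ^ 2 + (-1 + x) ^ 2 = 2 * x ^ 2 + 2 := by ring
    simp only [h, Finset.sum_add_distrib, ← Finset.mul_sum, ih]
    simp only [Finset.sum_const, Finset.card_univ, Fintype.card_pi, Fintype.card_bool,
      Finset.prod_const, Fintype.card_fin, nsmul_eq_mul]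
    push_cast
    ring

lemma sum_signSum_pow_four (n : ℕ) :
    ∑ s : Fin n → Bool, signSum s ^ 4 = 2 ^ n * (3 * n ^ 2 - 2 * n) := by
  induction n with
  | zero => simp [signSum]
  | succ n ih =>
    simp only [sum_fin_succ_bool, signSum_cons, if_true, Bool.false_eq_true, if_false]
    have h (x : ℝ) : (1 + x) ^ 4 + (-1 + x) ^ 4 = 2 * x ^ 4 + 12 * x ^ 2 + 2 := by ring
    simp only [h, Finset.sum_add_distrib, ← Finset.mul_sum, ih, sum_signSum_sq]
    simp only [Finset.sum_const, Finset.card_univ, Fintype.card_pi, Fintype.card_bool,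
      Finset.prod_const, Fintype.card_fin, nsmul_eq_mul]
    push_cast
    ring

lemma sq_sum_abs_signSum_le (n : ℕ) : (∑ s : Fin n → Bool, |signSum s|) ^ 2 ≤ 4 ^ n * n := by
  refine sq_sum_le_card_mul_sum_sq.trans_eq ?_
  simp only [Finset.card_univ, Fintype.card_fun, Fintype.card_bool, Fintype.card_fin, sq_abs,
    sum_signSum_sq]
  push_cast
  rw [← mul_assoc, ← mul_pow]
  norm_num

lemma le_sq_sum_abs_signSum (n : ℕ) : 4 ^ n * n ≤ 3 * (∑ s : Fin n → Bool, |signSum s|) ^ 2 := by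
  have h := sum_sq_pow_three_le_sq_sum_abs_mul_sum_pow_four Finset.univ (signSum (n := n))
  rw [sum_signSum_sq, sum_signSum_pow_four] at h
  set A := ∑ s : Fin n → Bool, |signSum s|
  rcases n.eq_zero_or_pos with rfl | hn
  · simp only [pow_zero, CharP.cast_eq_zero, mul_zero]
    positivity
  have hpos : (0 : ℝ) < 2 ^ n * n ^ 2 := by positivity
  refine le_of_mul_le_mul_left ?_ hpos
  calc (2 : ℝ) ^ n * n ^ 2 * (4 ^ n * n) = (2 ^ n * n) ^ 3 := by
        rw [show (4 : ℝ) ^ n = 2 ^ n * 2 ^ n by rw [← mul_pow]; norm_num]; ring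
    _ ≤ A ^ 2 * (2 ^ n * (3 * n ^ 2 - 2 * n)) := h
    _ ≤ 2 ^ n * n ^ 2 * (3 * A ^ 2) := by
        have : 0 ≤ A ^ 2 * 2 ^ n * n := by positivity
        nlinarith

end SignSum

section MeanAbsDev

variable {N : ℕ}

/-- `E |Bin(N, 1/2) / N - 1/2|`, with `#{j | s j}` the number of successes of the outcome `s`. -/
noncomputable def binomialMeanAbsDev (N : ℕ) : ℝ :=
  (2 ^ N)⁻¹ * ∑ s : Fin N → Bool, |(#{j | s j} : ℝ) / N - 1 / 2|

lemma binomialMeanAbsDev_nonneg (N : ℕ) : 0 ≤ binomialMeanAbsDev N := by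
  unfold binomialMeanAbsDev; positivity

lemma binomialMeanAbsDev_eq (hN : N ≠ 0) :
    binomialMeanAbsDev N = (∑ s : Fin N → Bool, |signSum s|) / (2 ^ N * (2 * N)) := by
  have h (s : Fin N → Bool) : |(#{j | s j} : ℝ) / N - 1 / 2| = |signSum s| / (2 * N) := by
    rw [← abs_of_pos (by positivity : (0 : ℝ) < 2 * N), ← abs_div, signSum_eq]
    congr 1
    field_simp
  simp only [binomialMeanAbsDev, h, ← Finset.sum_div]
  field_simp

lemma binomialMeanAbsDev_sq_le (hN : N ≠ 0) : binomialMeanAbsDev N ^ 2 ≤ (4 * N : ℝ)⁻¹ := by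
  rw [binomialMeanAbsDev_eq hN, div_pow, div_le_iff₀ (by positivity)]
  calc (∑ s : Fin N → Bool, |signSum s|) ^ 2 ≤ 4 ^ N * N := sq_sum_abs_signSum_le N
    _ = (4 * N : ℝ)⁻¹ * (2 ^ N * (2 * N)) ^ 2 := by
      rw [show (4 : ℝ) ^ N = (2 ^ N) ^ 2 by rw [← pow_mul, mul_comm, pow_mul]; norm_num]
      field_simp
      ring

lemma inv_le_binomialMeanAbsDev_sq (hN : N ≠ 0) : (12 * N : ℝ)⁻¹ ≤ binomialMeanAbsDev N ^ 2 := by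
  rw [binomialMeanAbsDev_eq hN, div_pow, le_div_iff₀ (by positivity)]
  calc (12 * N : ℝ)⁻¹ * (2 ^ N * (2 * N)) ^ 2 = 4 ^ N * N / 3 := by
        rw [show (4 : ℝ) ^ N = (2 ^ N) ^ 2 by rw [← pow_mul, mul_comm, pow_mul]; norm_num]
        field_simp
        ring
    _ ≤ (∑ s : Fin N → Bool, |signSum s|) ^ 2 := by
      rw [div_le_iff₀ three_pos]
      linarith [le_sq_sum_abs_signSum N]

variable {d : ℕ} {a b : Fin d → ℝ}

lemma lintegral_abs_empMeas_sub_half (hab : a ≠ b) :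
    ∫⁻ x, ENNReal.ofReal |(empMeas N x {a}).toReal - 1 / 2|
        ∂(Measure.pi fun _ : Fin N => uniformPair a b) =
      ENNReal.ofReal (binomialMeanAbsDev N) := by
  rw [lintegral_pi_uniformPair, binomialMeanAbsDev, ENNReal.ofReal_mul (by positivity),
    ENNReal.ofReal_sum_of_nonneg fun _ _ => abs_nonneg _]
  simp [empMeas_pair_singleton_left hab, ENNReal.ofReal_inv_of_pos, ENNReal.ofReal_pow]

end MeanAbsDev

lemma Real.rpow_one_div_eq_sq_rpow {x : ℝ} (hx : 0 ≤ x) (p : ℝ) :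
    x ^ (1 / p) = (x ^ 2) ^ (1 / (2 * p)) := by
  rw [← Real.rpow_natCast, ← Real.rpow_mul hx]
  congr 1
  push_cast
  ring

lemma Real.inv_mul_rpow {k x : ℝ} (hk : 0 ≤ k) (hx : 0 ≤ x) (q : ℝ) :
    (k * x)⁻¹ ^ q = k ^ (-q) * x ^ (-q) := by
  rw [Real.rpow_neg hk, Real.rpow_neg hx, ← mul_inv, ← Real.mul_rpow hk hx,
    Real.inv_rpow (mul_nonneg hk hx)]

lemma binomialMeanAbsDev_rpow_bounds {N : ℕ} {p : ℝ} (hp : 0 < p) (hN : N ≠ 0) :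
    (12 : ℝ) ^ (-1 / (2 * p)) * (N : ℝ) ^ (-1 / (2 * p)) ≤ binomialMeanAbsDev N ^ (1 / p) ∧
      binomialMeanAbsDev N ^ (1 / p) ≤ (4 : ℝ) ^ (-1 / (2 * p)) * (N : ℝ) ^ (-1 / (2 * p)) := by
  rw [Real.rpow_one_div_eq_sq_rpow (binomialMeanAbsDev_nonneg N), neg_div,
    ← Real.inv_mul_rpow (by norm_num) N.cast_nonneg,
    ← Real.inv_mul_rpow (by norm_num) N.cast_nonneg]
  exact ⟨Real.rpow_le_rpow (by positivity) (inv_le_binomialMeanAbsDev_sq hN) (by positivity),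
    Real.rpow_le_rpow (sq_nonneg _) (binomialMeanAbsDev_sq_le hN) (by positivity)⟩

/-- For the two-point measure `μ = ½δ_a + ½δ_b` with `a ≠ b`:
`E[ρ_p^p(μ, μ̂_N)]^{1/p} = ‖a − b‖ · E[|μ̂_N({a}) − ½|]^{1/p}`, and consequently
`E[ρ_p^p(μ, μ̂_N)]^{1/p}` is of exact order `N^{−1/(2p)}`. -/
theorem two_point_measure_rate {d : ℕ} (p : ℝ) (hp : 1 ≤ p)
    (a b : Fin d → ℝ) (hab : a ≠ b) :
    (∀ N : ℕ, 1 ≤ N →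
      (expWpPow p ((2 : ℝ≥0∞)⁻¹ • (Measure.dirac a + Measure.dirac b)) N) ^ (1 / p)
        = (‖a - b‖₊ : ℝ≥0∞) *
          (∫⁻ x : Fin N → (Fin d → ℝ),
              ENNReal.ofReal |(empMeas N x {a}).toReal - 1 / 2|
            ∂(Measure.pi fun _ : Fin N =>
                (2 : ℝ≥0∞)⁻¹ • (Measure.dirac a + Measure.dirac b))) ^ (1 / p)) ∧
    ∃ c C : ℝ, 0 < c ∧ c ≤ C ∧ ∀ N : ℕ, 1 ≤ N →
      ENNReal.ofReal (c * (N : ℝ) ^ (-(1 : ℝ) / (2 * p))) ≤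
        (expWpPow p ((2 : ℝ≥0∞)⁻¹ • (Measure.dirac a + Measure.dirac b)) N) ^ (1 / p) ∧
      (expWpPow p ((2 : ℝ≥0∞)⁻¹ • (Measure.dirac a + Measure.dirac b)) N) ^ (1 / p) ≤
        ENNReal.ofReal (C * (N : ℝ) ^ (-(1 : ℝ) / (2 * p))) := by
  have hp0 : 0 < p := by linarith
  have hrate (N : ℕ) (hN : 1 ≤ N) : expWpPow p (uniformPair a b) N ^ (1 / p) =
      (‖a - b‖₊ : ℝ≥0∞) * (∫⁻ x, ENNReal.ofReal |(empMeas N x {a}).toReal - 1 / 2|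
        ∂(Measure.pi fun _ : Fin N => uniformPair a b)) ^ (1 / p) := by
    rw [expWpPow_uniformPair p hp0 hab (by omega), ENNReal.mul_rpow_of_nonneg _ _ (by positivity),
      ← ENNReal.rpow_mul, mul_one_div_cancel hp0.ne', ENNReal.rpow_one]
  refine ⟨hrate, ‖a - b‖ * 12 ^ (-1 / (2 * p)), ‖a - b‖ * 4 ^ (-1 / (2 * p)),
    mul_pos (norm_pos_iff.2 (sub_ne_zero.2 hab)) (by positivity), ?_, fun N hN => ?_⟩
  · refine mul_le_mul_of_nonneg_left (Real.rpow_le_rpow_of_nonpos (by norm_num) (by norm_num) ?_)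
      (norm_nonneg _)
    exact div_nonpos_of_nonpos_of_nonneg (by norm_num) (by positivity)
  obtain ⟨hlower, hupper⟩ := binomialMeanAbsDev_rpow_bounds hp0 (by omega : N ≠ 0)
  rw [show (2 : ℝ≥0∞)⁻¹ • (Measure.dirac a + Measure.dirac b) = uniformPair a b from rfl,
    hrate N hN, lintegral_abs_empMeas_sub_half hab,
    ENNReal.ofReal_rpow_of_nonneg (binomialMeanAbsDev_nonneg N) (by positivity),
    ← enorm_eq_nnnorm, ← ofReal_norm, ← ENNReal.ofReal_mul (norm_nonneg _)]
  constructor <;> refine ENNReal.ofReal_le_ofReal ?_ <;> rw [mul_assoc] <;> gcongr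
end
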